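/- arXiv:1305.0216 — 3 statements merged into one kernel-verified Lean document; each statement's English description precedes it below -/
import Mathlib

section
/- There exist infinitely many rational numbers c such that the map f_c(z) = z^2 + c has exactly 4 rational preperiodic points, of which exactly 2 are periodic, and both periodic points are fixed points of f_c. (This cardinality and cycle-structure data characterizes the directed graph 4(1,1) of rational preperiodic points, since f_c(z) = f_c(-z).) -/
/-- The quadratic map `f_c(z) = z² + c`. -/
def fc (c : ℚ) : ℚ → ℚ := fun z => z ^ 2 + c

/-- `x` is preperiodic for `f_c`: its forward orbit is eventually periodic. -/
def IsPreper (c x : ℚ) : Prop := ∃ m n : ℕ, m < n ∧ (fc c)^[m] x = (fc c)^[n] x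

/-- `x` is periodic for `f_c`. -/
def IsPer (c x : ℚ) : Prop := ∃ n : ℕ, 1 ≤ n ∧ (fc c)^[n] x = x

/-!
Take `c = a - a²` with `a ≥ 3` an integer, so that `a` and `1 - a` are the fixed points of `f_c`,
with further preimages `-a` and `a - 1`. Since `c` is an integer, the denominator of `x` is squared
by `f_c`, so preperiodic points are integers. Since `f_c z - |z| = (|z| - a)(|z| + a - 1)`, every
`z` with `|z| > a` escapes, so a preperiodic `x` satisfies `|x| ≤ a` and `|f_c x| ≤ a`, which for
integers forces `|x| ≥ a - 1`. Hence the preperiodic points are `±a, ±(a - 1)`, all mapped to fixed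
points in one step, so the periodic points are the two fixed points.
-/

lemma den_fc_intCast (k : ℤ) (x : ℚ) : (fc k x).den = x.den ^ 2 := by
  rw [fc, sq, Rat.add_intCast_den, Rat.mul_self_den, sq]

lemma den_iterate_fc_intCast (k : ℤ) (x : ℚ) (n : ℕ) :
    ((fc k)^[n] x).den = x.den ^ 2 ^ n := by
  induction n with
  | zero => simp
  | succ n ih => rw [Function.iterate_succ_apply', den_fc_intCast, ih, ← pow_mul, pow_succ]

lemma IsPreper.den_eq_one {k : ℤ} {x : ℚ} (hx : IsPreper k x) : x.den = 1 := by
  obtain ⟨m, n, hmn, h⟩ := hx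
  by_contra hne
  have hden : 1 < x.den := lt_of_le_of_ne x.pos (Ne.symm hne)
  have := congrArg Rat.den h
  rw [den_iterate_fc_intCast, den_iterate_fc_intCast] at this
  exact (Nat.pow_lt_pow_right hden (Nat.pow_lt_pow_right one_lt_two hmn)).ne this

lemma IsPreper.fc_apply {c x : ℚ} (hx : IsPreper c x) : IsPreper c (fc c x) := by
  obtain ⟨m, n, hmn, h⟩ := hx
  refine ⟨m, n, hmn, ?_⟩
  rw [← Function.iterate_succ_apply, Function.iterate_succ_apply', h,
    ← Function.iterate_succ_apply, Function.iterate_succ_apply']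

lemma isPreper_of_fc_fc {c x : ℚ} (hx : fc c (fc c x) = fc c x) : IsPreper c x :=
  ⟨1, 2, one_lt_two, by simp [hx]⟩

lemma IsPer.isPreper {c x : ℚ} (hx : IsPer c x) : IsPreper c x := by
  obtain ⟨n, hn, h⟩ := hx
  exact ⟨0, n, hn, h.symm⟩

lemma isPer_of_fc_eq_self {c x : ℚ} (hx : fc c x = x) : IsPer c x :=
  ⟨1, le_rfl, hx⟩

lemma IsPer.fc_eq_self_of_fc_fc {c x : ℚ} (hx : IsPer c x) (hfx : fc c (fc c x) = fc c x) :
    fc c x = x := by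
  obtain ⟨n, hn, h⟩ := hx
  obtain ⟨n, rfl⟩ := Nat.exists_eq_add_of_le' hn
  have h' : (fc c)^[n] (fc c x) = fc c x := Function.iterate_fixed hfx n
  rwa [← Function.iterate_succ_apply, h, eq_comm] at h'

lemma setOf_isPer_eq_setOf_fc_eq_self {c : ℚ}
    (h : ∀ x, IsPreper c x → fc c (fc c x) = fc c x) :
    {x | IsPer c x} = {x | fc c x = x} := by
  ext x
  exact ⟨fun hx => hx.fc_eq_self_of_fc_fc (h x hx.isPreper), isPer_of_fc_eq_self⟩

section family

variable {a : ℚ}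

lemma fc_eq_self_iff (x : ℚ) : fc (a - a ^ 2) x = x ↔ x = a ∨ x = 1 - a := by
  have : fc (a - a ^ 2) x - x = (x - a) * (x - (1 - a)) := by rw [fc]; ring
  rw [← sub_eq_zero, this, mul_eq_zero, sub_eq_zero, sub_eq_zero]

lemma lt_abs_fc (ha : 1 / 2 ≤ a) {z : ℚ} (hz : a < |z|) : |z| < |fc (a - a ^ 2) z| := by
  have key : fc (a - a ^ 2) z - |z| = (|z| - a) * (|z| + a - 1) := by
    rw [fc, ← sq_abs]; ring
  have : 0 < (|z| - a) * (|z| + a - 1) := mul_pos (by linarith) (by linarith)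
  exact lt_of_lt_of_le (by linarith) (le_abs_self _)

lemma not_isPreper_of_lt_abs (ha : 1 / 2 ≤ a) {x : ℚ} (hx : a < |x|) :
    ¬ IsPreper (a - a ^ 2) x := by
  have escape : ∀ n, a < |(fc (a - a ^ 2))^[n] x| := by
    intro n
    induction n with
    | zero => exact hx
    | succ n ih => rw [Function.iterate_succ_apply']; exact ih.trans (lt_abs_fc ha ih)
  have mono : StrictMono fun n => |(fc (a - a ^ 2))^[n] x| := strictMono_nat_of_lt_succ fun n => by
    rw [Function.iterate_succ_apply']; exact lt_abs_fc ha (escape n)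
  rintro ⟨m, n, hmn, h⟩
  exact (mono hmn).ne (congrArg abs h)

lemma IsPreper.abs_le (ha : 1 / 2 ≤ a) {x : ℚ} (hx : IsPreper (a - a ^ 2) x) : |x| ≤ a :=
  not_lt.1 fun h => not_isPreper_of_lt_abs ha h hx

end family

lemma Int.eq_of_abs_le_of_abs_sq_add_le {a k : ℤ} (ha : 3 ≤ a) (hk : |k| ≤ a)
    (hfk : |k ^ 2 + (a - a ^ 2)| ≤ a) : k = a ∨ k = -a ∨ k = a - 1 ∨ k = 1 - a := by
  have hsq : (a - 2) ^ 2 < k ^ 2 := by nlinarith [(abs_le.1 hfk).1]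
  have hlt : a - 2 < |k| := by simpa [abs_of_pos (by omega : 0 < a - 2)] using sq_lt_sq.1 hsq
  rcases abs_cases k with ⟨h, -⟩ | ⟨h, -⟩ <;> omega

lemma setOf_isPreper_eq (a : ℤ) (ha : 3 ≤ a) :
    {x : ℚ | IsPreper (a - a ^ 2) x} =
      ({(a : ℚ), -(a : ℚ), (a : ℚ) - 1, 1 - (a : ℚ)} : Set ℚ) := by
  have ha' : (1 / 2 : ℚ) ≤ a := by
    have : (3 : ℚ) ≤ a := by exact_mod_cast ha
    linarith
  ext x
  simp only [Set.mem_insert_iff, Set.mem_singleton_iff]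
  constructor
  · intro hx
    have hc : ((a : ℚ) - a ^ 2) = ((a - a ^ 2 : ℤ) : ℚ) := by push_cast; ring
    obtain ⟨k, rfl⟩ : ∃ k : ℤ, x = k :=
      ⟨x.num, ((Rat.den_eq_one_iff x).1 (hc ▸ hx).den_eq_one).symm⟩
    have hk : |k| ≤ a := by exact_mod_cast hx.abs_le ha'
    have hfk : |k ^ 2 + (a - a ^ 2)| ≤ a := by
      have := hx.fc_apply.abs_le ha'
      rw [fc] at this
      exact_mod_cast this
    rcases Int.eq_of_abs_le_of_abs_sq_add_le ha hk hfk with rfl | rfl | rfl | rfl <;> simp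
  · rintro (rfl | rfl | rfl | rfl) <;> exact isPreper_of_fc_fc (by simp only [fc]; ring)

lemma fc_fc_eq_of_isPreper {a : ℤ} (ha : 3 ≤ a) {x : ℚ} (hx : IsPreper (a - a ^ 2) x) :
    fc (a - a ^ 2) (fc (a - a ^ 2) x) = fc (a - a ^ 2) x := by
  have hx : x ∈ {x : ℚ | IsPreper (a - a ^ 2) x} := hx
  rw [setOf_isPreper_eq a ha] at hx
  rcases hx with rfl | rfl | rfl | rfl <;> (simp only [fc]; ring)

/-- Graph 4(1,1): infinitely many `c ∈ ℚ` with exactly 4 rational preperiodic points,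
exactly 2 of them periodic, and every periodic point fixed. -/
theorem graph_4_1_1 :
    {c : ℚ | {x : ℚ | IsPreper c x}.ncard = 4 ∧ {x : ℚ | IsPer c x}.ncard = 2 ∧
      ∀ x : ℚ, IsPer c x → fc c x = x}.Infinite := by
  have hanti : StrictAnti fun n : ℕ => ((n + 3 : ℤ) : ℚ) - ((n + 3 : ℤ) : ℚ) ^ 2 :=
    strictAnti_nat_of_succ_lt fun n => by push_cast; nlinarith
  refine Set.infinite_of_injective_forall_mem hanti.injective fun n => ?_
  set a : ℤ := n + 3
  have ha : 3 ≤ a := by omega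
  have hA : (3 : ℚ) ≤ a := by exact_mod_cast ha
  have hper := setOf_isPer_eq_setOf_fc_eq_self fun x (hx : IsPreper _ x) =>
    fc_fc_eq_of_isPreper ha hx
  refine ⟨?_, ?_, fun x hx => hper.subset hx⟩
  · rw [setOf_isPreper_eq a ha, Set.ncard_eq_four]
    exact ⟨_, _, _, _, by grind, by grind, by grind, by grind, by grind, by grind, rfl⟩
  · simp_rw [hper, fc_eq_self_iff]
    exact Set.ncard_pair (by linarith)
end

section
/- Let K be an algebraically closed field that is complete with respect to a nontrivial nonarchimedean multiplicative norm. Let f ∈ K[X] be a monic polynomial of degree d ≥ 2, with filled Julia set 𝒦_f = {x ∈ K : the orbit (f^[n](x))_{n≥0} is bounded in norm}. Suppose r > 0 is the radius of a minimal closed ball containing 𝒦_f, i.e., 𝒦_f ⊆ B̄(z₀, r) for some z₀ ∈ K and every closed ball containing 𝒦_f has radius ≥ r. Then for any point x₀ ∈ 𝒦_f, the filled Julia set is contained in the union of the closed balls of radius 1 centered at the roots of f(X) − x₀: 𝒦_f ⊆ ⋃_{x : f(x) = x₀} B̄(x, 1). -/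
/-!
Write `f - x₀ = ∏ (X - b)` over its roots `b`. Since `𝒦_f ⊆ B̄(z₀, r)` and balls in an
ultrametric field have diameter at most their radius, `‖f(u) - x₀‖ ≤ r` for `u ∈ 𝒦_f`.
Suppose some `x ∈ 𝒦_f` is at distance `> 1` from every root and let `M` be the largest of
these distances. Then `M < ‖f(x) - x₀‖ ≤ r`. A point `y ∈ 𝒦_f` with `‖y - x‖ > M` is at
distance `‖y - x‖` from every root, so `‖y - x‖ ^ d = ‖f(y) - x₀‖ ≤ r`, whence
`‖y - x‖ ≤ r / M`. Thus `𝒦_f ⊆ B̄(x, max M (r / M))`, a ball of radius `< r`: contradiction.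
-/

open Polynomial

/-- The orbit of `x` under evaluation of the polynomial `f` is bounded in norm. -/
def BoundedOrbit {K : Type*} [NormedField K] (f : K[X]) (x : K) : Prop :=
  ∃ C : ℝ, ∀ n : ℕ, ‖(fun y => f.eval y)^[n] x‖ ≤ C

lemma BoundedOrbit.eval {K : Type*} [NormedField K] {f : K[X]} {x : K} (h : BoundedOrbit f x) :
    BoundedOrbit f (f.eval x) := by
  obtain ⟨C, hC⟩ := h
  exact ⟨C, fun n => by simpa only [Function.iterate_succ_apply] using hC (n + 1)⟩

lemma IsUltrametricDist.dist_le_of_mem_closedBall {X : Type*} [PseudoMetricSpace X]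
    [IsUltrametricDist X] {x y z : X} {r : ℝ} (hx : x ∈ Metric.closedBall z r)
    (hy : y ∈ Metric.closedBall z r) : dist x y ≤ r := by
  rwa [closedBall_eq_of_mem hy] at hx

lemma IsUltrametricDist.norm_sub_eq_of_norm_sub_lt {E : Type*} [SeminormedAddCommGroup E]
    [IsUltrametricDist E] {x y b : E} (h : ‖x - b‖ < ‖y - x‖) : ‖y - b‖ = ‖y - x‖ := by
  rw [← sub_add_sub_cancel y x b, norm_add_eq_max_of_norm_ne_norm h.ne', max_eq_left h.le]

namespace Polynomial.Splits

variable {K : Type*} [NormedField K] {p : K[X]}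

lemma norm_eval_eq_prod_roots (hs : p.Splits) (hm : p.Monic) (y : K) :
    ‖p.eval y‖ = (p.roots.map (‖y - ·‖)).prod := by
  rw [hs.eval_eq_prod_roots_of_monic hm, ← normHom_apply, map_multiset_prod, Multiset.map_map]
  rfl

lemma norm_sub_root_lt_norm_eval (hs : p.Splits) (hm : p.Monic) (hdeg : 2 ≤ p.natDegree)
    {x b : K} (hfar : ∀ c ∈ p.roots, 1 < ‖x - c‖) (hb : b ∈ p.roots) :
    ‖x - b‖ < ‖p.eval x‖ := by
  classical
  have hrest : p.roots.erase b ≠ 0 := by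
    rw [← Multiset.card_pos, Multiset.card_erase_of_mem hb, ← hs.natDegree_eq_card_roots,
      Nat.pred_eq_sub_one]
    omega
  have hone : 1 < ((p.roots.erase b).map (‖x - ·‖)).prod := by
    simpa using Multiset.prod_map_lt_prod_map hrest (fun _ => 1) _ (fun _ _ => one_pos)
      fun c hc => hfar c (Multiset.mem_of_mem_erase hc)
  rw [hs.norm_eval_eq_prod_roots hm, ← Multiset.prod_map_erase (f := (‖x - ·‖)) hb]
  exact lt_mul_of_one_lt_right (one_pos.trans (hfar b hb)) hone

variable [IsUltrametricDist K]

lemma norm_eval_eq_pow_of_roots_near (hs : p.Splits) (hm : p.Monic) {x y : K}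
    (hnear : ∀ b ∈ p.roots, ‖x - b‖ < ‖y - x‖) : ‖p.eval y‖ = ‖y - x‖ ^ p.natDegree := by
  rw [hs.norm_eval_eq_prod_roots hm, hs.natDegree_eq_card_roots,
    Multiset.map_congr rfl fun b hb => IsUltrametricDist.norm_sub_eq_of_norm_sub_lt (hnear b hb),
    Multiset.map_const', Multiset.prod_replicate]

lemma norm_sub_le_of_norm_eval_le (hs : p.Splits) (hm : p.Monic) (hdeg : 2 ≤ p.natDegree)
    {x y : K} {M r : ℝ} (hM : 1 ≤ M) (hnear : ∀ b ∈ p.roots, ‖x - b‖ ≤ M)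
    (hy : ‖p.eval y‖ ≤ r) : ‖y - x‖ ≤ max M (r / M) := by
  refine le_max_iff.2 (or_iff_not_imp_left.2 fun hyM => ?_)
  push Not at hyM
  rw [hs.norm_eval_eq_pow_of_roots_near hm fun b hb => (hnear b hb).trans_lt hyM] at hy
  rw [le_div_iff₀ (one_pos.trans_le hM)]
  calc ‖y - x‖ * M ≤ ‖y - x‖ ^ 2 := by rw [sq]; gcongr
    _ ≤ ‖y - x‖ ^ p.natDegree := pow_le_pow_right₀ (hM.trans hyM.le) hdeg
    _ ≤ r := hy

end Polynomial.Splits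

theorem filledJulia_subset_unit_balls_general
    {K : Type*} [NontriviallyNormedField K] [IsAlgClosed K]
    [IsUltrametricDist K]
    (f : K[X]) (d : ℕ) (hd : 2 ≤ d) (hmonic : f.Monic) (hdeg : f.natDegree = d)
    (r : ℝ)
    (z₀ : K) (hcover : {x : K | BoundedOrbit f x} ⊆ Metric.closedBall z₀ r)
    (hmin : ∀ (z : K) (s : ℝ), {x : K | BoundedOrbit f x} ⊆ Metric.closedBall z s → r ≤ s)
    (x₀ : K) (hx₀ : BoundedOrbit f x₀) :
    {x : K | BoundedOrbit f x} ⊆ ⋃ x ∈ {x : K | f.eval x = x₀}, Metric.closedBall x 1 := by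
  have hbound {u : K} (hu : BoundedOrbit f u) : ‖(f - C x₀).eval u‖ ≤ r := by
    simpa [← dist_eq_norm] using
      IsUltrametricDist.dist_le_of_mem_closedBall (hcover hu.eval) (hcover hx₀)
  have hfdeg : 0 < f.degree := by
    rw [degree_eq_natDegree hmonic.ne_zero, hdeg]
    exact_mod_cast (by omega)
  have hm : (f - C x₀).Monic := hmonic.sub_of_left (degree_C_le.trans_lt hfdeg)
  have hpdeg : 2 ≤ (f - C x₀).natDegree := by rwa [natDegree_sub_C, hdeg]
  have hs : (f - C x₀).Splits := IsAlgClosed.splits _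
  intro x hx
  by_contra hclose
  have hfar : ∀ b ∈ (f - C x₀).roots, 1 < ‖x - b‖ := fun b hb => by
    by_contra! hb'
    refine hclose (Set.mem_biUnion ((mem_roots_sub_C hfdeg).1 hb) ?_)
    rwa [Metric.mem_closedBall, dist_eq_norm]
  have hroots : (f - C x₀).roots ≠ 0 := by
    rw [← Multiset.card_pos, ← hs.natDegree_eq_card_roots]
    omega
  obtain ⟨b₀, hb₀, hmax⟩ := Multiset.exists_max_image (‖x - ·‖) hroots
  have hM : 1 < ‖x - b₀‖ := hfar b₀ hb₀
  have hMr : ‖x - b₀‖ < r :=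
    (hs.norm_sub_root_lt_norm_eval hm hpdeg hfar hb₀).trans_le (hbound hx)
  refine (hmin x _ fun y hy => ?_).not_gt
    (max_lt hMr (div_lt_self (one_pos.trans (hM.trans hMr)) hM))
  rw [Metric.mem_closedBall, dist_eq_norm]
  exact hs.norm_sub_le_of_norm_eval_le hm hpdeg hM.le hmax (hbound hy)

/-- Benedetto's lemma, first containment: over an algebraically closed, complete,
nonarchimedean nontrivially normed field, if `r` is the radius of a minimal closed ball
containing the filled Julia set of a monic polynomial `f` of degree `d ≥ 2`, then for any
`x₀` in the filled Julia set, the filled Julia set is contained in the union of the closed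
balls of radius 1 about the roots of `f(X) - x₀`. -/
theorem filledJulia_subset_unit_balls
    {K : Type*} [NontriviallyNormedField K] [IsAlgClosed K] [CompleteSpace K]
    [IsUltrametricDist K]
    (f : K[X]) (d : ℕ) (hd : 2 ≤ d) (hmonic : f.Monic) (hdeg : f.natDegree = d)
    (r : ℝ) (hr : 0 < r)
    (z₀ : K) (hcover : {x : K | BoundedOrbit f x} ⊆ Metric.closedBall z₀ r)
    (hmin : ∀ (z : K) (s : ℝ), {x : K | BoundedOrbit f x} ⊆ Metric.closedBall z s → r ≤ s)
    (x₀ : K) (hx₀ : BoundedOrbit f x₀) :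
    {x : K | BoundedOrbit f x} ⊆ ⋃ x ∈ {x : K | f.eval x = x₀}, Metric.closedBall x 1 :=
  filledJulia_subset_unit_balls_general f d hd hmonic hdeg r z₀ hcover hmin x₀ hx₀
end

section
/- For every prime number p, the map f(z) = z² + 1/p has no rational preperiodic points: there is no x ∈ ℚ whose forward orbit under f is finite (equivalently, there are no m < n with f^[m](x) = f^[n](x)). -/
theorem Function.injective_iterate_apply_of_lt {α β : Type*} [Preorder β] {f : α → α}
    {v : α → β} (hv : ∀ y, v (f y) < v y) (x : α) : Function.Injective (f^[·] x) := by
  have hanti : StrictAnti (fun n => v (f^[n] x)) := strictAnti_nat_of_succ_lt fun n => by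
    simpa only [Function.iterate_succ_apply'] using hv _
  exact Function.Injective.of_comp hanti.injective

section

variable {p : ℕ} [Fact p.Prime] {c : ℚ}

/-- Since `padicValRat p c` is odd, `y ^ 2` and `c` never have the same valuation, so no
cancellation occurs in `y ^ 2 + c` and the ultrametric inequality is an equality. -/
theorem padicValRat_fc_lt (hc : padicValRat p c < 0) (hodd : Odd (padicValRat p c)) (y : ℚ) :
    padicValRat p (fc c y) < padicValRat p y := by
  rcases eq_or_ne y 0 with rfl | hy
  · simpa [fc] using hc
  have hc0 : c ≠ 0 := by rintro rfl; simp at hc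
  have hval : padicValRat p (y ^ 2) ≠ padicValRat p c := by
    rw [padicValRat.pow]
    rintro h
    exact Int.not_even_iff_odd.mpr hodd ⟨padicValRat p y, by push_cast at h; omega⟩
  have hsum : y ^ 2 + c ≠ 0 := by
    intro h
    rw [eq_neg_of_add_eq_zero_right h, padicValRat.neg] at hval
    exact hval rfl
  rw [fc, padicValRat.add_eq_min hsum (pow_ne_zero 2 hy) hc0 hval, padicValRat.pow]
  push_cast
  omega

theorem not_isPreper_of_padicValRat_neg_of_odd (hc : padicValRat p c < 0)
    (hodd : Odd (padicValRat p c)) (x : ℚ) : ¬ IsPreper c x := by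
  rintro ⟨m, n, hmn, hmn_eq⟩
  exact hmn.ne (Function.injective_iterate_apply_of_lt (padicValRat_fc_lt hc hodd) x hmn_eq)

end

/-- For every prime `p`, the map `f(z) = z² + 1/p` has no rational preperiodic points. -/
theorem no_preperiodic_of_one_over_prime (p : ℕ) (hp : p.Prime) (x : ℚ) :
    ¬ IsPreper (1 / (p : ℚ)) x := by
  have : Fact p.Prime := ⟨hp⟩
  have hval : padicValRat p (1 / (p : ℚ)) = -1 := by
    rw [one_div, padicValRat.inv, padicValRat.self hp.one_lt]
  exact not_isPreper_of_padicValRat_neg_of_odd (by rw [hval]; decide) (by rw [hval]; decide) x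
end
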